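/- Let (E_t, β_{s,t})_{s,t∈ℚ_{>0}} be a rational-time subproduct system of two-dimensional Hilbert spaces, let (Ẽ_t, β̃_{s,t})_{s,t∈(0,∞)} be an algebraic product system of Hilbert spaces, and let (α_t)_{t∈ℚ_{>0}} be a representation of the former in the latter. For t ∈ (0,1) let U_t : Ẽ_1 → Ẽ_1 be the unitary determined by β̃_{t,1−t}(U_t h) = ξ̃_{1−t,t}(β̃_{1−t,t}(h)) for h ∈ Ẽ_1. Assume that for every h ∈ Ẽ_1 the function t ↦ ⟨U_t h, h⟩ on (0,1) extends to a continuous function on [0,1] taking the value ‖h‖² at t = 0 and at t = 1. Then for every h ∈ E_1 the function on ℚ ∩ [0,1] equal to ⟨β_{t,1−t}(h), ξ_{1−t,t}(β_{1−t,t}(h))⟩ for t ∈ ℚ ∩ (0,1) and equal to ‖h‖² at t ∈ {0,1} is uniformly continuous. -/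

import Mathlib

noncomputable section

open scoped TensorProduct ComplexConjugate

namespace SubprodHilbert

section TensorConstruction


variable {E F : Type*} [NormedAddCommGroup E] [InnerProductSpace ℂ E]
  [NormedAddCommGroup F] [InnerProductSpace ℂ F]

local notation "⟪" x ", " y "⟫" => @inner ℂ _ _ x y

/-- For fixed `u, v`, the ℂ-bilinear functional `(u', v') ↦ ⟪u,u'⟫ ⟪v,v'⟫`. -/
def innerAux (u : E) (v : F) : E →ₗ[ℂ] F →ₗ[ℂ] ℂ :=
  LinearMap.mk₂ ℂ (fun u' v' => ⟪u, u'⟫ * ⟪v, v'⟫)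
    (fun m₁ m₂ n => by simp [inner_add_right]; ring)
    (fun c m n => by simp [inner_smul_right]; ring)
    (fun m n₁ n₂ => by simp [inner_add_right]; ring)
    (fun c m n => by simp [inner_smul_right]; ring)

@[simp] lemma innerAux_apply (u u' : E) (v v' : F) :
    innerAux u v u' v' = ⟪u, u'⟫ * ⟪v, v'⟫ := rfl

/-- The (conjugate-linear-in-the-first-variable) map sending `z : E ⊗ F` to the linear
functional `w ↦ ⟪z, w⟫`. -/
def innerFunc : E ⊗[ℂ] F →+ (E ⊗[ℂ] F →ₗ[ℂ] ℂ) :=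
  TensorProduct.liftAddHom
    (AddMonoidHom.mk'
      (fun u => AddMonoidHom.mk' (fun v => TensorProduct.lift (innerAux u v))
        (fun v₁ v₂ => by
          apply TensorProduct.ext'
          intro u' v'
          simp [inner_add_left]
          ring))
      (fun u₁ u₂ => by
        ext v : 1
        apply TensorProduct.ext'
        intro u' v'
        simp [inner_add_left]
        ring))
    (fun c u v => by
      apply TensorProduct.ext'
      intro u' v'
      simp [inner_smul_left]
      ring)

@[simp] lemma innerFunc_tmul (u u' : E) (v v' : F) :
    innerFunc (u ⊗ₜ[ℂ] v) (u' ⊗ₜ[ℂ] v') = ⟪u, u'⟫ * ⟪v, v'⟫ := rfl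

lemma innerFunc_smul (c : ℂ) (z : E ⊗[ℂ] F) :
    innerFunc (c • z) = conj c • innerFunc z := by
  induction z using TensorProduct.induction_on with
  | zero => simp
  | tmul u v =>
      rw [TensorProduct.smul_tmul']
      apply TensorProduct.ext'
      intro u' v'
      simp [inner_smul_left]
      ring
  | add z₁ z₂ h₁ h₂ => rw [smul_add, map_add, map_add, h₁, h₂, smul_add]

lemma innerFunc_conj_symm (z w : E ⊗[ℂ] F) :
    conj (innerFunc w z) = innerFunc z w := by
  induction z using TensorProduct.induction_on with
  | zero => simp
  | tmul u v =>
      induction w using TensorProduct.induction_on with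
      | zero => simp
      | tmul u' v' =>
          simp only [innerFunc_tmul, map_mul, inner_conj_symm]
      | add w₁ w₂ h₁ h₂ => simp [map_add, h₁, h₂]
  | add z₁ z₂ h₁ h₂ => simp [map_add, h₁, h₂]

lemma exists_orthonormal_rep (z : E ⊗[ℂ] F) :
    ∃ (n : ℕ) (e : Fin n → E) (w : Fin n → F),
      Orthonormal ℂ e ∧ z = ∑ i, e i ⊗ₜ[ℂ] w i := by
  obtain ⟨S, rfl⟩ := TensorProduct.exists_finset z
  set U : Submodule ℂ E := Submodule.span ℂ (Prod.fst '' (S : Set (E × F))) with hU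
  haveI : FiniteDimensional ℂ U :=
    FiniteDimensional.span_of_finite ℂ (S.finite_toSet.image _)
  let b : OrthonormalBasis (Fin (Module.finrank ℂ U)) ℂ U := stdOrthonormalBasis ℂ U
  have hone : Orthonormal ℂ (fun i => (b i : E)) := by
    have hb := b.orthonormal
    constructor
    · intro i; simpa [norm] using hb.1 i
    · intro i j hij; simpa [Submodule.coe_inner] using hb.2 hij
  refine ⟨_, fun i => (b i : E), fun i => ∑ p ∈ S, ⟪(b i : E), p.1⟫ • p.2, hone, ?_⟩
  have key : ∀ p ∈ S, p.1 ⊗ₜ[ℂ] p.2 = ∑ i, ⟪(b i : E), p.1⟫ • ((b i : E) ⊗ₜ[ℂ] p.2) := by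
    intro p hp
    have hmem : p.1 ∈ U := Submodule.subset_span ⟨p, hp, rfl⟩
    have hrep : ((∑ i, (⟪b i, (⟨p.1, hmem⟩ : U)⟫ : ℂ) • b i : U) : E) = p.1 := by
      rw [b.sum_repr' ⟨p.1, hmem⟩]
    have h2 : ∀ i, (⟪b i, (⟨p.1, hmem⟩ : U)⟫ : ℂ) = ⟪(b i : E), p.1⟫ := fun i =>
      Submodule.coe_inner U (b i) ⟨p.1, hmem⟩
    have hrep' : p.1 = ∑ i, ⟪(b i : E), p.1⟫ • (b i : E) := by
      calc p.1 = ((∑ i, (⟪b i, (⟨p.1, hmem⟩ : U)⟫ : ℂ) • b i : U) : E) := hrep.symm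
        _ = ∑ i, (⟪b i, (⟨p.1, hmem⟩ : U)⟫ : ℂ) • (b i : E) := by push_cast; rfl
        _ = ∑ i, ⟪(b i : E), p.1⟫ • (b i : E) := Finset.sum_congr rfl fun i _ => by rw [h2]
    calc p.1 ⊗ₜ[ℂ] p.2 = (∑ i, ⟪(b i : E), p.1⟫ • (b i : E)) ⊗ₜ[ℂ] p.2 := by rw [← hrep']
      _ = ∑ i, ⟪(b i : E), p.1⟫ • ((b i : E) ⊗ₜ[ℂ] p.2) := by
          rw [TensorProduct.sum_tmul]
          refine Finset.sum_congr rfl fun i _ => ?_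
          rw [TensorProduct.smul_tmul']
  calc ∑ p ∈ S, p.1 ⊗ₜ[ℂ] p.2
      = ∑ p ∈ S, ∑ i, ⟪(b i : E), p.1⟫ • ((b i : E) ⊗ₜ[ℂ] p.2) :=
        Finset.sum_congr rfl key
    _ = ∑ i, ∑ p ∈ S, ⟪(b i : E), p.1⟫ • ((b i : E) ⊗ₜ[ℂ] p.2) := Finset.sum_comm
    _ = ∑ i, (b i : E) ⊗ₜ[ℂ] (∑ p ∈ S, ⟪(b i : E), p.1⟫ • p.2) := by
        refine Finset.sum_congr rfl fun i _ => ?_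
        rw [TensorProduct.tmul_sum]
        refine Finset.sum_congr rfl fun p _ => ?_
        rw [TensorProduct.tmul_smul]

lemma innerFunc_self (n : ℕ) (e : Fin n → E) (w : Fin n → F) (he : Orthonormal ℂ e) :
    innerFunc (∑ i, e i ⊗ₜ[ℂ] w i) (∑ i, e i ⊗ₜ[ℂ] w i) = ∑ i, ⟪w i, w i⟫ := by
  have hee : ∀ i j, (⟪e i, e j⟫ : ℂ) = if i = j then 1 else 0 := orthonormal_iff_ite.mp he
  simp only [map_sum, LinearMap.coe_sum, Finset.sum_apply, innerFunc_tmul, hee, ite_mul,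
    one_mul, zero_mul]
  rw [Finset.sum_comm]
  simp

/-- The inner-product-space core on the algebraic tensor product of two complex
inner product spaces, determined by `⟪u ⊗ v, u' ⊗ v'⟫ = ⟪u,u'⟫ ⟪v,v'⟫`. -/
def tensorCore : InnerProductSpace.Core ℂ (E ⊗[ℂ] F) where
  inner z w := innerFunc z w
  conj_inner_symm := innerFunc_conj_symm
  re_inner_nonneg z := by
    show 0 ≤ RCLike.re (innerFunc z z)
    obtain ⟨n, e, w, he, rfl⟩ := exists_orthonormal_rep z
    rw [innerFunc_self n e w he]
    rw [map_sum]
    exact Finset.sum_nonneg fun i _ => inner_self_nonneg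
  add_left z₁ z₂ w := by
    show innerFunc (z₁ + z₂) w = innerFunc z₁ w + innerFunc z₂ w
    rw [map_add]; rfl
  smul_left z w c := by
    show innerFunc (c • z) w = conj c * innerFunc z w
    rw [innerFunc_smul]; rfl
  definite z hz := by
    replace hz : innerFunc z z = 0 := hz
    obtain ⟨n, e, w, he, rfl⟩ := exists_orthonormal_rep z
    rw [innerFunc_self n e w he] at hz
    have hz' : ∑ i, (‖w i‖ ^ 2 : ℝ) = 0 := by
      have := congrArg Complex.re hz
      simpa [← @inner_self_eq_norm_sq ℂ] using this
    have hw : ∀ i ∈ Finset.univ, w i = 0 := by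
      intro i hi
      have h0 : (‖w i‖ ^ 2 : ℝ) = 0 :=
        (Finset.sum_eq_zero_iff_of_nonneg fun j _ => sq_nonneg _).mp hz' i hi
      simpa using h0
    calc ∑ i, e i ⊗ₜ[ℂ] w i = ∑ i : Fin n, (0 : E ⊗[ℂ] F) :=
          Finset.sum_congr rfl fun i hi => by rw [hw i hi, TensorProduct.tmul_zero]
      _ = 0 := Finset.sum_const_zero

instance tensorNormedAddCommGroup : NormedAddCommGroup (E ⊗[ℂ] F) :=
  @InnerProductSpace.Core.toNormedAddCommGroup ℂ _ _ _ _ tensorCore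

instance tensorInnerProductSpace : InnerProductSpace ℂ (E ⊗[ℂ] F) :=
  InnerProductSpace.ofCore tensorCore.toCore

@[simp] lemma inner_tmul (u u' : E) (v v' : F) :
    (inner ℂ (u ⊗ₜ[ℂ] v) (u' ⊗ₜ[ℂ] v') : ℂ) = ⟪u, u'⟫ * ⟪v, v'⟫ := rfl
end TensorConstruction


/-- Cast between the fibers of a family of inner product spaces along an equality of
indices, as a linear isometric isomorphism. -/
def castE {ι : Type*} (E : ι → Type*) [∀ t, NormedAddCommGroup (E t)]
    [∀ t, InnerProductSpace ℂ (E t)] {a b : ι} (h : a = b) : E a ≃ₗᵢ[ℂ] E b := by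
  subst h; exact LinearIsometryEquiv.refl ℂ (E a)


/-- The positive rationals, the time domain of a rational-time subproduct system. -/
abbrev Qpos : Type := {q : ℚ // 0 < q}

section Rational

variable (E : Qpos → Type*)
  [∀ t, NormedAddCommGroup (E t)] [∀ t, InnerProductSpace ℂ (E t)]
variable (β : ∀ s t : Qpos, E (s + t) →ₗᵢ[ℂ] (E s ⊗[ℂ] E t))

/-- The associativity condition in the definition of a rational-time subproduct system. -/
def SubprodAssocQ : Prop :=
  ∀ r s t : Qpos, ∀ u : E (r + s + t),
    (TensorProduct.assoc ℂ (E r) (E s) (E t))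
      (TensorProduct.map (β r s).toLinearMap LinearMap.id (β (r + s) t u))
    = TensorProduct.map LinearMap.id (β s t).toLinearMap
        (β r (s + t) (castE E (add_assoc r s t) u))

/-- Condition (1) of Theorem 3.1, with the parameter `a` explicit:
`(x, y)` behaves like two exponential units at angle `aᵗ`. -/
def Cond1With (a : ℝ) (x y : ∀ t : Qpos, E t) : Prop :=
  (∀ t, ‖x t‖ = 1) ∧ (∀ t, ‖y t‖ = 1) ∧
  (∀ t : Qpos, (inner ℂ (x t) (y t) : ℂ) = ((a ^ ((t : ℚ) : ℝ) : ℝ) : ℂ)) ∧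
  (∀ s t : Qpos, β s t (x (s + t)) = x s ⊗ₜ[ℂ] x t) ∧
  (∀ s t : Qpos, β s t (y (s + t)) = y s ⊗ₜ[ℂ] y t)

/-- Condition (1) of Theorem 3.1: `∃ a ∈ [0,1)` as in `Cond1With`. -/
def Cond1 (x y : ∀ t : Qpos, E t) : Prop :=
  ∃ a : ℝ, 0 ≤ a ∧ a < 1 ∧ Cond1With E β a x y

/-- Condition (3) of Theorem 3.1, with the parameter `c` and the multiplicative
unimodular family `η` explicit. -/
def Cond3With (c : ℝ) (η : Qpos → ℂ) (x y : ∀ t : Qpos, E t) : Prop :=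
  (∀ t, ‖η t‖ = 1) ∧ (∀ s t : Qpos, η (s + t) = η s * η t) ∧
  (∀ t, ‖x t‖ = 1) ∧ (∀ t : Qpos, (inner ℂ (x t) (y t) : ℂ) = 0) ∧
  (∀ t : Qpos, ‖y t‖ ^ 2 =
    if c = 1 then ((t : ℚ) : ℝ) else (c ^ (2 * ((t : ℚ) : ℝ)) - 1) / (c ^ 2 - 1)) ∧
  (∀ s t : Qpos, β s t (x (s + t)) = x s ⊗ₜ[ℂ] x t) ∧
  (∀ s t : Qpos, β s t (y (s + t)) =
    y s ⊗ₜ[ℂ] x t + (((c ^ ((s : ℚ) : ℝ) : ℝ) : ℂ) * η s) • (x s ⊗ₜ[ℂ] y t))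

/-- Condition (3) of Theorem 3.1. -/
def Cond3 (x y : ∀ t : Qpos, E t) : Prop :=
  ∃ c : ℝ, 0 < c ∧ ∃ η : Qpos → ℂ, Cond3With E β c η x y

/-- Condition (4) of Theorem 3.1. -/
def Cond4 (x y : ∀ t : Qpos, E t) : Prop :=
  (∀ t, ‖x t‖ = 1) ∧ (∀ t, ‖y t‖ = 1) ∧
  (∀ t : Qpos, (inner ℂ (x t) (y t) : ℂ) = 0) ∧
  (∀ s t : Qpos, β s t (x (s + t)) = x s ⊗ₜ[ℂ] x t) ∧
  (∀ s t : Qpos, β s t (y (s + t)) = y s ⊗ₜ[ℂ] x t)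

/-- Condition (5) of Theorem 3.1. -/
def Cond5 (x y : ∀ t : Qpos, E t) : Prop :=
  (∀ t, ‖x t‖ = 1) ∧ (∀ t, ‖y t‖ = 1) ∧
  (∀ t : Qpos, (inner ℂ (x t) (y t) : ℂ) = 0) ∧
  (∀ s t : Qpos, β s t (x (s + t)) = x s ⊗ₜ[ℂ] x t) ∧
  (∀ s t : Qpos, β s t (y (s + t)) = x s ⊗ₜ[ℂ] y t)

/-- The function `t ↦ ⟨β_{t,1-t} h, ξ_{1-t,t} β_{1-t,t} h⟩` on `ℚ ∩ (0,1)` (written here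
with the two arguments of the inner product exchanged, to match the convention of Mathlib's
`inner`, which is conjugate-linear in its first argument), extended by `‖h‖²` elsewhere. -/
def flipInnerFn (h : E 1) : ℚ → ℂ := fun t =>
  if ht : 0 < t ∧ t < 1 then
    (inner ℂ
      ((TensorProduct.comm ℂ (E ⟨1 - t, by linarith [ht.2]⟩) (E ⟨t, ht.1⟩))
        (β ⟨1 - t, by linarith [ht.2]⟩ ⟨t, ht.1⟩
          (castE E (by apply Subtype.ext; simp) h)))
      (β ⟨t, ht.1⟩ ⟨1 - t, by linarith [ht.2]⟩
        (castE E (by apply Subtype.ext; simp) h)) : ℂ)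
  else ((‖h‖ : ℂ)) ^ 2

end Rational


/-- The positive reals, the time domain of a product system. -/
abbrev Rpos : Type := {x : ℝ // 0 < x}

/-- The embedding of the positive rationals into the positive reals. -/
def QtoR : Qpos → Rpos := fun q => ⟨((q : ℚ) : ℝ), by exact_mod_cast q.2⟩

lemma QtoR_add (s t : Qpos) : QtoR s + QtoR t = QtoR (s + t) := by
  apply Subtype.ext; simp [QtoR]

section ProdSys

variable (G : Rpos → Type*)
  [∀ t, NormedAddCommGroup (G t)] [∀ t, InnerProductSpace ℂ (G t)]
variable (M : ∀ s t : Rpos, (G s ⊗[ℂ] G t) →ₗᵢ[ℂ] G (s + t))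

/-- Associativity of the multiplication of an (algebraic) product system, expressed on
elementary tensors (by density this pins down the usual associativity diagram). -/
def ProdAssoc : Prop :=
  ∀ r s t : Rpos, ∀ (a : G r) (b : G s) (c : G t),
    M (r + s) t ((M r s (a ⊗ₜ[ℂ] b)) ⊗ₜ[ℂ] c)
      = castE G (add_assoc r s t).symm (M r (s + t) (a ⊗ₜ[ℂ] (M s t (b ⊗ₜ[ℂ] c))))

end ProdSys

/-!
Let `h'` be the image of `h ∈ E₁` in `G 1`. For rational `t ∈ (0,1)` the representation property
writes `h'` both as `M_{1-t,t} (α ⊗ α) β_{1-t,t} h` and as `M_{t,1-t} (α ⊗ α) β_{t,1-t} h`. Since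
`U_t` carries the first factorization to the flip of its tensor, and `M`, `α ⊗ α` are isometric,
`⟨β_{t,1-t} h, ξ β_{1-t,t} h⟩` is the matrix coefficient `⟨U_t h', h'⟩`. So the function in question
is the restriction to `ℚ ∩ [0,1]` of a continuous function on the compact interval `[0,1]`, hence
uniformly continuous.
-/

section Transport

variable {ι : Type*} (H : ι → Type*) [∀ t, NormedAddCommGroup (H t)]
  [∀ t, InnerProductSpace ℂ (H t)]

lemma castE_castE {a b c : ι} (e₁ : a = b) (e₂ : b = c) (u : H a) :
    castE H e₂ (castE H e₁ u) = castE H (e₁.trans e₂) u := by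
  subst e₁ e₂; rfl

lemma apply_castE {κ : Type*} (K : κ → Type*) [∀ t, NormedAddCommGroup (K t)]
    [∀ t, InnerProductSpace ℂ (K t)] (φ : ι → κ) (f : ∀ t, H t →ₗᵢ[ℂ] K (φ t))
    {a b : ι} (e : a = b) (u : H a) :
    f b (castE H e u) = castE K (congrArg φ e) (f a u) := by
  subst e; rfl

end Transport

section TensorInner

variable {E F : Type*} [NormedAddCommGroup E] [InnerProductSpace ℂ E]
  [NormedAddCommGroup F] [InnerProductSpace ℂ F]

/-- The statement uses both `tensorInnerProductSpace` (through the isometries `β`, `M`) and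
Mathlib's `TensorProduct.instInner` (in `flipInnerFn`); they agree. -/
lemma inner_tensorInnerProductSpace (z w : E ⊗[ℂ] F) :
    @inner ℂ _ (tensorInnerProductSpace (E := E) (F := F)).toInner z w = inner ℂ z w := by
  change innerFunc z w = _
  induction z using TensorProduct.induction_on with
  | zero => simp [TensorProduct.inner_def]
  | tmul u v =>
    induction w using TensorProduct.induction_on with
    | zero => simp [TensorProduct.inner_def]
    | tmul u' v' =>
      exact (innerFunc_tmul u u' v v').trans (TensorProduct.inner_tmul ℂ u u' v v').symm
    | add w₁ w₂ h₁ h₂ => simp_all [TensorProduct.inner_def]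
  | add z₁ z₂ h₁ h₂ => simp_all [TensorProduct.inner_def]

end TensorInner

section ProductSystem

variable {G : Rpos → Type*} [∀ t, NormedAddCommGroup (G t)] [∀ t, InnerProductSpace ℂ (G t)]
  {M : ∀ s t : Rpos, (G s ⊗[ℂ] G t) →ₗᵢ[ℂ] G (s + t)}

lemma inner_flip_eq_inner_comm {a b c : Rpos} (hab : a + b = c) (hba : b + a = c)
    (V : G c ≃ₗᵢ[ℂ] G c)
    (hV : ∀ z, V (castE G hab (M a b z)) = castE G hba (M b a (TensorProduct.comm ℂ _ _ z)))
    (z : G a ⊗[ℂ] G b) (w : G b ⊗[ℂ] G a)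
    (hzw : castE G hab (M a b z) = castE G hba (M b a w)) :
    inner ℂ (castE G hab (M a b z)) (V (castE G hab (M a b z)))
      = conj (inner ℂ (TensorProduct.comm ℂ _ _ z) w) := by
  let := tensorInnerProductSpace (E := G b) (F := G a)
  rw [hV, hzw, (castE G hba).inner_map_map, (M b a).inner_map_map, ← inner_conj_symm,
    inner_tensorInnerProductSpace]

variable (M) in
def IsFlipFamily (U : ∀ t : ℝ, 0 < t → t < 1 → (G 1 ≃ₗᵢ[ℂ] G 1)) : Prop :=
  ∀ (t : ℝ) (h0 : 0 < t) (h1 : t < 1) (z : G ⟨1 - t, by linarith⟩ ⊗[ℂ] G ⟨t, h0⟩),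
    U t h0 h1 (castE G (by apply Subtype.ext; simp) (M ⟨1 - t, by linarith⟩ ⟨t, h0⟩ z))
      = castE G (by apply Subtype.ext; simp)
          (M ⟨t, h0⟩ ⟨1 - t, by linarith⟩
            ((TensorProduct.comm ℂ (G ⟨1 - t, by linarith⟩) (G ⟨t, h0⟩)) z))

lemma IsFlipFamily.apply_castE {U : ∀ t : ℝ, 0 < t → t < 1 → (G 1 ≃ₗᵢ[ℂ] G 1)}
    (hU : IsFlipFamily M U) {t : ℝ} (h0 : 0 < t) (h1 : t < 1) {a b : Rpos}
    (ha : (a : ℝ) = 1 - t) (hb : (b : ℝ) = t) (hab : a + b = 1) (hba : b + a = 1)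
    (z : G a ⊗[ℂ] G b) :
    U t h0 h1 (castE G hab (M a b z)) = castE G hba (M b a (TensorProduct.comm ℂ _ _ z)) := by
  obtain rfl : a = ⟨1 - t, by linarith⟩ := Subtype.ext ha
  obtain rfl : b = ⟨t, h0⟩ := Subtype.ext hb
  exact hU t h0 h1 z

end ProductSystem

section Representation

variable {E : Qpos → Type*} [∀ t, NormedAddCommGroup (E t)] [∀ t, InnerProductSpace ℂ (E t)]
  {β : ∀ s t : Qpos, E (s + t) →ₗᵢ[ℂ] (E s ⊗[ℂ] E t)}
  {G : Rpos → Type*} [∀ t, NormedAddCommGroup (G t)] [∀ t, InnerProductSpace ℂ (G t)]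
  {M : ∀ s t : Rpos, (G s ⊗[ℂ] G t) →ₗᵢ[ℂ] G (s + t)}
  {α : ∀ t : Qpos, E t →ₗᵢ[ℂ] G (QtoR t)}

variable (β M) in
def IsRepresentation (α : ∀ t : Qpos, E t →ₗᵢ[ℂ] G (QtoR t)) : Prop :=
  ∀ s t : Qpos, ∀ u : E (s + t),
    α (s + t) u = castE G (QtoR_add s t)
      (M (QtoR s) (QtoR t) (TensorProduct.map (α s).toLinearMap (α t).toLinearMap (β s t u)))

lemma QtoR_one : QtoR 1 = 1 := Subtype.ext (by simp [QtoR])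

lemma IsRepresentation.castE_apply_one (hrep : IsRepresentation β M α) {s t : Qpos} (hst : s + t = 1) (hst' : QtoR s + QtoR t = 1) (h : E 1) :
    castE G QtoR_one (α 1 h) = castE G hst'
      (M (QtoR s) (QtoR t)
        (TensorProduct.map (α s).toLinearMap (α t).toLinearMap (β s t (castE E hst.symm h)))) := by
  calc castE G QtoR_one (α 1 h)
      = castE G ((congrArg QtoR hst).trans QtoR_one) (α (s + t) (castE E hst.symm h)) := by
        rw [apply_castE E G QtoR α, castE_castE]
    _ = _ := by rw [hrep, castE_castE]

lemma flipInnerFn_eq_conj_inner (hrep : IsRepresentation β M α)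
    {U : ∀ t : ℝ, 0 < t → t < 1 → (G 1 ≃ₗᵢ[ℂ] G 1)} (hU : IsFlipFamily M U) (h : E 1)
    {q : ℚ} (hq : 0 < q ∧ q < 1) :
    flipInnerFn E β h q = conj (inner ℂ (castE G QtoR_one (α 1 h))
      (U q (Rat.cast_pos.2 hq.1) (by exact_mod_cast hq.2) (castE G QtoR_one (α 1 h)))) := by
  set s : Qpos := ⟨1 - q, by linarith⟩
  set τ : Qpos := ⟨q, hq.1⟩
  have hsτ : s + τ = 1 := Subtype.ext (by simp [s, τ])
  have hτs : τ + s = 1 := Subtype.ext (by simp [s, τ])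
  have hsτ' : QtoR s + QtoR τ = 1 := by rw [QtoR_add, hsτ, QtoR_one]
  have hτs' : QtoR τ + QtoR s = 1 := by rw [QtoR_add, hτs, QtoR_one]
  have hz := hrep.castE_apply_one hsτ hsτ' h
  have hw := hrep.castE_apply_one hτs hτs' h
  have hflip := hU.apply_castE (Rat.cast_pos.2 hq.1) (by exact_mod_cast hq.2)
    (a := QtoR s) (b := QtoR τ) (by simp [QtoR, s]) rfl hsτ' hτs'
  rw [hz, inner_flip_eq_inner_comm hsτ' hτs' _ hflip _ _ (hz.symm.trans hw),
    ← TensorProduct.map_comm, TensorProduct.inner_map_map, Complex.conj_conj, flipInnerFn,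
    dif_pos hq]

end Representation

lemma uniformContinuousOn_ratCast_Icc {X : Type*} [UniformSpace X] {g : ℝ → X} {a b : ℚ}
    (hg : ContinuousOn g (Set.Icc (a : ℝ) b)) :
    UniformContinuousOn (fun q : ℚ => g q) (Set.Icc a b) :=
  (isCompact_Icc.uniformContinuousOn_of_continuous hg).comp
    Rat.uniformContinuous_coe_real.uniformContinuousOn
    fun _ hq => ⟨Rat.cast_le.2 hq.1, Rat.cast_le.2 hq.2⟩

/-- **Proposition 4.2.** If a rational-time subproduct system is represented in an
(algebraic) product system whose "flip" unitaries `U_t` have continuous matrix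
coefficients (Liebscher's theorem provides this for Arveson systems), then for every
`h ∈ E₁` the function `t ↦ ⟨β_{t,1-t} h, ξ_{1-t,t} β_{1-t,t} h⟩` (with value `‖h‖²` at the
endpoints) is uniformly continuous on `ℚ ∩ [0,1]`. -/
theorem statement18
    (E : Qpos → Type*) [∀ t, NormedAddCommGroup (E t)] [∀ t, InnerProductSpace ℂ (E t)]
    (β : ∀ s t : Qpos, E (s + t) →ₗᵢ[ℂ] (E s ⊗[ℂ] E t))
    (G : Rpos → Type*) [∀ t, NormedAddCommGroup (G t)] [∀ t, InnerProductSpace ℂ (G t)]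
    (M : ∀ s t : Rpos, (G s ⊗[ℂ] G t) →ₗᵢ[ℂ] G (s + t))
    (α : ∀ t : Qpos, E t →ₗᵢ[ℂ] G (QtoR t))
    (hrep : ∀ s t : Qpos, ∀ u : E (s + t),
      α (s + t) u = castE G (QtoR_add s t)
        (M (QtoR s) (QtoR t)
          (TensorProduct.map (α s).toLinearMap (α t).toLinearMap (β s t u))))
    (U : ∀ t : ℝ, 0 < t → t < 1 → (G 1 ≃ₗᵢ[ℂ] G 1))
    (hU : ∀ (t : ℝ) (h0 : 0 < t) (h1 : t < 1)
        (z : G ⟨1 - t, by linarith⟩ ⊗[ℂ] G ⟨t, h0⟩),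
      U t h0 h1
          (castE G (by apply Subtype.ext; simp) (M ⟨1 - t, by linarith⟩ ⟨t, h0⟩ z))
        = castE G (by apply Subtype.ext; simp)
            (M ⟨t, h0⟩ ⟨1 - t, by linarith⟩
              ((TensorProduct.comm ℂ (G ⟨1 - t, by linarith⟩) (G ⟨t, h0⟩)) z)))
    (hcont : ∀ h : G 1, ∃ g : ℝ → ℂ, ContinuousOn g (Set.Icc (0 : ℝ) 1) ∧
      g 0 = ((‖h‖ : ℂ)) ^ 2 ∧ g 1 = ((‖h‖ : ℂ)) ^ 2 ∧
      ∀ (t : ℝ) (h0 : 0 < t) (h1 : t < 1), g t = (inner ℂ h (U t h0 h1 h) : ℂ)) :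
    ∀ h : E 1, UniformContinuousOn (flipInnerFn E β h) (Set.Icc (0 : ℚ) 1) := by
  intro h
  obtain ⟨g, hg, hg0, hg1, hgU⟩ := hcont (castE G QtoR_one (α 1 h))
  have hg_conj : ContinuousOn (conj ∘ g) (Set.Icc ((0 : ℚ) : ℝ) ((1 : ℚ) : ℝ)) :=
    Complex.continuous_conj.comp_continuousOn (by simpa using hg)
  refine (uniformContinuousOn_ratCast_Icc hg_conj).congr fun q hq => ?_
  change conj (g q) = _
  by_cases hq' : 0 < q ∧ q < 1
  · rw [flipInnerFn_eq_conj_inner hrep hU h hq', hgU]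
  · obtain rfl | rfl : q = 0 ∨ q = 1 := by
      by_contra! hq01
      exact hq' ⟨hq.1.lt_of_ne' hq01.1, hq.2.lt_of_ne hq01.2⟩
    all_goals
      rw [flipInnerFn, dif_neg hq']
      simp only [Rat.cast_zero, Rat.cast_one, hg0, hg1, map_pow, Complex.conj_ofReal,
        LinearIsometryEquiv.norm_map, LinearIsometry.norm_map]

end SubprodHilbert
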